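/- (Error bound for weighted GMRES; the linear-algebra core of Theorems 2.2 and 2.9 of the paper.) Let D ∈ ℂ^{N×N} be Hermitian positive definite and let C ∈ ℂ^{N×N} satisfy ‖I − C‖_D ≤ 1/2. Then C is invertible with ‖C‖_D ≤ 3/2 and ‖C⁻¹‖_D ≤ 2, and for every d ∈ ℂ^N, with u := C⁻¹ d and zero initial guess (x⁰ = 0, so r⁰ = −d), every m ∈ ℕ and every minimizer x^m of ‖C x − d‖_D over x ∈ K^m(C, d) satisfy ‖x^m − u‖_D ≤ 3 · (2√2/3)^m · ‖u‖_D. -/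

import Mathlib

open scoped ComplexOrder

noncomputable section

/-- The Euclidean inner product on `ℂ^N`, linear in the first argument. -/
def inner2 {N : ℕ} (x y : Fin N → ℂ) : ℂ := ∑ i, x i * (starRingEnd ℂ) (y i)

/-- The weighted inner product `(x,y)_D := (D x, y)₂`. -/
def innerW {N : ℕ} (D : Matrix (Fin N) (Fin N) ℂ) (x y : Fin N → ℂ) : ℂ :=
  inner2 (D.mulVec x) y

/-- The weighted norm `‖x‖_D := (x,x)_D^{1/2}`. -/
def normW {N : ℕ} (D : Matrix (Fin N) (Fin N) ℂ) (x : Fin N → ℂ) : ℝ :=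
  Real.sqrt (innerW D x x).re

/-- The matrix norm induced by the weighted norm `‖·‖_D`. -/
def opNormW {N : ℕ} (D C : Matrix (Fin N) (Fin N) ℂ) : ℝ :=
  sSup {t : ℝ | ∃ x : Fin N → ℂ, x ≠ 0 ∧ t = normW D (C.mulVec x) / normW D x}

/-- The numerical range `W_D(C) := { (C x, x)_D : ‖x‖_D = 1 }`. -/
def numRange {N : ℕ} (D C : Matrix (Fin N) (Fin N) ℂ) : Set ℂ :=
  {z | ∃ x : Fin N → ℂ, normW D x = 1 ∧ z = innerW D (C.mulVec x) x}

/-- The `m`-th Krylov space `K^m(C,r) := span{C^j r : 0 ≤ j ≤ m-1}`. -/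
def krylov {N : ℕ} (C : Matrix (Fin N) (Fin N) ℂ) (r : Fin N → ℂ) (m : ℕ) :
    Submodule ℂ (Fin N → ℂ) :=
  Submodule.span ℂ {v | ∃ j < m, v = (C ^ j).mulVec r}

/-!
The Neumann partial sum `∑_{j<m} (I - C)^j d` lies in `K^m(C, d)` and has residual
`-(I - C)^m d`, of `D`-norm at most `2^{-m} ‖d‖_D`. The minimizer `x^m` has a residual no larger,
and `x^m - u = C⁻¹ (C x^m - d)` turns residual into error at the cost of
`‖C⁻¹‖_D ‖C‖_D ≤ 2 · 3/2 = 3`. This gives the bound with rate `1/2`, which is below `2√2/3`.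
-/

open Matrix

section WeightedNorm

variable {N : ℕ} {D : Matrix (Fin N) (Fin N) ℂ}

/-- A type synonym for `Fin N → ℂ`, to carry the `D`-weighted norm instead of the sup norm. -/
def WeightedSpace (_D : Matrix (Fin N) (Fin N) ℂ) : Type := Fin N → ℂ

lemma normW_nonneg (x : Fin N → ℂ) : 0 ≤ normW D x :=
  Real.sqrt_nonneg _

lemma normW_eq_zero_iff (hD : D.PosDef) {x : Fin N → ℂ} : normW D x = 0 ↔ x = 0 :=
  letI : NormedAddCommGroup (WeightedSpace D) := D.toNormedAddCommGroup hD
  norm_eq_zero (E := WeightedSpace D) (a := x)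

lemma normW_pos (hD : D.PosDef) {x : Fin N → ℂ} (hx : x ≠ 0) : 0 < normW D x :=
  (normW_nonneg x).lt_of_ne' (mt (normW_eq_zero_iff hD).mp hx)

lemma normW_add_le (hD : D.PosDef) (x y : Fin N → ℂ) :
    normW D (x + y) ≤ normW D x + normW D y :=
  letI : NormedAddCommGroup (WeightedSpace D) := D.toNormedAddCommGroup hD
  norm_add_le (E := WeightedSpace D) x y

lemma normW_neg (hD : D.PosDef) (x : Fin N → ℂ) : normW D (-x) = normW D x :=
  letI : NormedAddCommGroup (WeightedSpace D) := D.toNormedAddCommGroup hD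
  norm_neg (E := WeightedSpace D) x

lemma exists_normW_mulVec_le (hD : D.PosDef) (C : Matrix (Fin N) (Fin N) ℂ) :
    ∃ K, ∀ x, normW D (C *ᵥ x) ≤ K * normW D x := by
  let _ : NormedAddCommGroup (WeightedSpace D) := D.toNormedAddCommGroup hD
  let _ : InnerProductSpace ℂ (WeightedSpace D) := D.toInnerProductSpace hD.posSemidef
  have : FiniteDimensional ℂ (WeightedSpace D) :=
    inferInstanceAs (FiniteDimensional ℂ (Fin N → ℂ))
  let T : WeightedSpace D →L[ℂ] WeightedSpace D :=
    LinearMap.toContinuousLinearMap C.mulVecLin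
  exact ⟨‖T‖, T.le_opNorm⟩

lemma normW_mulVec_le_opNormW (hD : D.PosDef) (C : Matrix (Fin N) (Fin N) ℂ) (x : Fin N → ℂ) :
    normW D (C *ᵥ x) ≤ opNormW D C * normW D x := by
  rcases eq_or_ne x 0 with rfl | hx
  · simp [(normW_eq_zero_iff hD).mpr rfl]
  obtain ⟨K, hK⟩ := exists_normW_mulVec_le hD C
  have hbdd : BddAbove {t : ℝ | ∃ x : Fin N → ℂ, x ≠ 0 ∧
      t = normW D (C *ᵥ x) / normW D x} := by
    refine ⟨K, ?_⟩
    rintro _ ⟨y, hy, rfl⟩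
    exact (div_le_iff₀ (normW_pos hD hy)).mpr (hK y)
  exact (div_le_iff₀ (normW_pos hD hx)).mp (le_csSup hbdd ⟨x, hx, rfl⟩)

lemma opNormW_le_of_normW_mulVec_le (hD : D.PosDef) {C : Matrix (Fin N) (Fin N) ℂ} {a : ℝ}
    (ha : 0 ≤ a) (hC : ∀ x, normW D (C *ᵥ x) ≤ a * normW D x) : opNormW D C ≤ a := by
  refine Real.sSup_le ?_ ha
  rintro _ ⟨x, hx, rfl⟩
  exact (div_le_iff₀ (normW_pos hD hx)).mpr (hC x)

end WeightedNorm

section NearIdentity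

variable {N : ℕ} {D C : Matrix (Fin N) (Fin N) ℂ} {q : ℝ}

lemma normW_mulVec_le_one_add_mul (hD : D.PosDef)
    (hq : ∀ x, normW D ((1 - C) *ᵥ x) ≤ q * normW D x) (x : Fin N → ℂ) :
    normW D (C *ᵥ x) ≤ (1 + q) * normW D x := by
  have hx : C *ᵥ x = x + -((1 - C) *ᵥ x) := by
    rw [sub_mulVec, one_mulVec]; abel
  calc normW D (C *ᵥ x) ≤ normW D x + normW D ((1 - C) *ᵥ x) := by
        rw [hx, ← normW_neg hD ((1 - C) *ᵥ x)]; exact normW_add_le hD _ _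
    _ ≤ (1 + q) * normW D x := by linarith [hq x]

lemma one_sub_mul_normW_le_normW_mulVec (hD : D.PosDef)
    (hq : ∀ x, normW D ((1 - C) *ᵥ x) ≤ q * normW D x) (x : Fin N → ℂ) :
    (1 - q) * normW D x ≤ normW D (C *ᵥ x) := by
  have hx : x = (1 - C) *ᵥ x + C *ᵥ x := by
    rw [sub_mulVec, one_mulVec]; abel
  have h := normW_add_le hD ((1 - C) *ᵥ x) (C *ᵥ x)
  rw [← hx] at h
  linarith [hq x]

lemma isUnit_of_normW_one_sub_mulVec_le (hD : D.PosDef) (hq1 : q < 1)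
    (hq : ∀ x, normW D ((1 - C) *ᵥ x) ≤ q * normW D x) : IsUnit C := by
  refine mulVec_injective_iff_isUnit.mp fun x y hxy => ?_
  have h := one_sub_mul_normW_le_normW_mulVec hD hq (x - y)
  rw [mulVec_sub, hxy, sub_self, (normW_eq_zero_iff hD).mpr rfl] at h
  have : normW D (x - y) = 0 :=
    le_antisymm (by nlinarith [normW_nonneg (D := D) (x - y)]) (normW_nonneg _)
  exact sub_eq_zero.mp ((normW_eq_zero_iff hD).mp this)

lemma normW_inv_mulVec_le_inv_one_sub_mul (hD : D.PosDef) (hq1 : q < 1)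
    (hq : ∀ x, normW D ((1 - C) *ᵥ x) ≤ q * normW D x) (y : Fin N → ℂ) :
    normW D (C⁻¹ *ᵥ y) ≤ (1 - q)⁻¹ * normW D y := by
  have hdet := (isUnit_iff_isUnit_det C).mp (isUnit_of_normW_one_sub_mulVec_le hD hq1 hq)
  have h := one_sub_mul_normW_le_normW_mulVec hD hq (C⁻¹ *ᵥ y)
  rw [mulVec_mulVec, mul_nonsing_inv C hdet, one_mulVec] at h
  rwa [le_inv_mul_iff₀ (sub_pos.mpr hq1)]

lemma normW_pow_mulVec_le {B : Matrix (Fin N) (Fin N) ℂ} (hq0 : 0 ≤ q)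
    (hB : ∀ x, normW D (B *ᵥ x) ≤ q * normW D x) (k : ℕ) (x : Fin N → ℂ) :
    normW D ((B ^ k) *ᵥ x) ≤ q ^ k * normW D x := by
  induction k with
  | zero => simp
  | succ k ih =>
    calc normW D ((B ^ (k + 1)) *ᵥ x) = normW D (B *ᵥ ((B ^ k) *ᵥ x)) := by
          rw [mulVec_mulVec, pow_succ']
      _ ≤ q * (q ^ k * normW D x) := (hB _).trans (mul_le_mul_of_nonneg_left ih hq0)
      _ = q ^ (k + 1) * normW D x := by ring

end NearIdentity

section Krylov

variable {N : ℕ}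

lemma aeval_mulVec_mem_krylov (C : Matrix (Fin N) (Fin N) ℂ) (d : Fin N → ℂ) {m : ℕ}
    {p : Polynomial ℂ} (hp : p.natDegree < m) : Polynomial.aeval C p *ᵥ d ∈ krylov C d m := by
  rw [Polynomial.aeval_eq_sum_range' hp, sum_mulVec]
  refine Submodule.sum_mem _ fun j hj => ?_
  rw [smul_mulVec]
  exact Submodule.smul_mem _ _ (Submodule.subset_span ⟨j, Finset.mem_range.mp hj, rfl⟩)

lemma geom_sum_one_sub_mulVec_mem_krylov (C : Matrix (Fin N) (Fin N) ℂ) (d : Fin N → ℂ)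
    (m : ℕ) : (∑ j ∈ Finset.range m, (1 - C) ^ j) *ᵥ d ∈ krylov C d m := by
  rw [sum_mulVec]
  refine Submodule.sum_mem _ fun j hj => ?_
  have hdeg : ((1 - Polynomial.X : Polynomial ℂ) ^ j).natDegree < m :=
    (Polynomial.natDegree_pow_le_of_le (m := 1) j (by compute_degree!)).trans_lt
      (by simpa using hj)
  simpa using aeval_mulVec_mem_krylov C d hdeg

end Krylov

section GMRES

variable {N : ℕ} {D C : Matrix (Fin N) (Fin N) ℂ} {q : ℝ}

/-- The Neumann partial sum `∑_{j<m} (I - C)^j d` is a competitor in `K^m(C, d)` with residual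
`-(I - C)^m d`. -/
lemma normW_residual_le_of_isMinOn (hD : D.PosDef) (hq0 : 0 ≤ q)
    (hq : ∀ x, normW D ((1 - C) *ᵥ x) ≤ q * normW D x) {d xm : Fin N → ℂ} {m : ℕ}
    (hmin : IsMinOn (fun x => normW D (C *ᵥ x - d)) (krylov C d m) xm) :
    normW D (C *ᵥ xm - d) ≤ q ^ m * normW D d := by
  have hres : C *ᵥ ((∑ j ∈ Finset.range m, (1 - C) ^ j) *ᵥ d) - d = -((1 - C) ^ m *ᵥ d) := by
    have hgeom : C * ∑ j ∈ Finset.range m, (1 - C) ^ j = 1 - (1 - C) ^ m := by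
      simpa using mul_neg_geom_sum (1 - C) m
    rw [mulVec_mulVec, hgeom, sub_mulVec, one_mulVec]
    abel
  calc normW D (C *ᵥ xm - d)
      ≤ normW D (C *ᵥ ((∑ j ∈ Finset.range m, (1 - C) ^ j) *ᵥ d) - d) :=
        isMinOn_iff.mp hmin _ (geom_sum_one_sub_mulVec_mem_krylov C d m)
    _ ≤ q ^ m * normW D d := by
        rw [hres, normW_neg hD]; exact normW_pow_mulVec_le hq0 hq m d

lemma normW_sub_inv_mulVec_le_of_isMinOn (hD : D.PosDef) (hq0 : 0 ≤ q) (hq1 : q < 1)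
    (hq : ∀ x, normW D ((1 - C) *ᵥ x) ≤ q * normW D x) {d xm : Fin N → ℂ} {m : ℕ}
    (hmin : IsMinOn (fun x => normW D (C *ᵥ x - d)) (krylov C d m) xm) :
    normW D (xm - C⁻¹ *ᵥ d) ≤ (1 + q) / (1 - q) * q ^ m * normW D (C⁻¹ *ᵥ d) := by
  have hdet := (isUnit_iff_isUnit_det C).mp (isUnit_of_normW_one_sub_mulVec_le hD hq1 hq)
  have herr : xm - C⁻¹ *ᵥ d = C⁻¹ *ᵥ (C *ᵥ xm - d) := by
    rw [mulVec_sub, mulVec_mulVec, nonsing_inv_mul C hdet, one_mulVec]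
  have hd : normW D d ≤ (1 + q) * normW D (C⁻¹ *ᵥ d) := by
    simpa [mulVec_mulVec, mul_nonsing_inv C hdet] using
      normW_mulVec_le_one_add_mul hD hq (C⁻¹ *ᵥ d)
  calc normW D (xm - C⁻¹ *ᵥ d) ≤ (1 - q)⁻¹ * normW D (C *ᵥ xm - d) :=
        herr ▸ normW_inv_mulVec_le_inv_one_sub_mul hD hq1 hq _
    _ ≤ (1 - q)⁻¹ * (q ^ m * ((1 + q) * normW D (C⁻¹ *ᵥ d))) := by
        gcongr
        exact (normW_residual_le_of_isMinOn hD hq0 hq hmin).trans (by gcongr)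
    _ = (1 + q) / (1 - q) * q ^ m * normW D (C⁻¹ *ᵥ d) := by ring

end GMRES

theorem error_bound_weighted_GMRES_general {N : ℕ}
    (D C : Matrix (Fin N) (Fin N) ℂ) (hD : D.PosDef)
    (h : opNormW D (1 - C) ≤ 1 / 2) :
    IsUnit C ∧ opNormW D C ≤ 3 / 2 ∧ opNormW D C⁻¹ ≤ 2 ∧
    ∀ (d : Fin N → ℂ) (m : ℕ) (xm : Fin N → ℂ),
      xm ∈ krylov C d m →
      (∀ x ∈ krylov C d m, normW D (C.mulVec xm - d) ≤ normW D (C.mulVec x - d)) →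
      normW D (xm - C⁻¹.mulVec d) ≤
        3 * (2 * Real.sqrt 2 / 3) ^ m * normW D (C⁻¹.mulVec d) := by
  have hq : ∀ x, normW D ((1 - C) *ᵥ x) ≤ 1 / 2 * normW D x := fun x =>
    (normW_mulVec_le_opNormW hD (1 - C) x).trans (by gcongr; exact normW_nonneg x)
  refine ⟨isUnit_of_normW_one_sub_mulVec_le hD (by norm_num) hq, ?_, ?_, fun d m xm _ hmin => ?_⟩
  · exact opNormW_le_of_normW_mulVec_le hD (by norm_num) fun x =>
      (normW_mulVec_le_one_add_mul hD hq x).trans_eq (by norm_num)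
  · exact opNormW_le_of_normW_mulVec_le hD (by norm_num) fun x =>
      (normW_inv_mulVec_le_inv_one_sub_mul hD (by norm_num) hq x).trans_eq (by norm_num)
  · have hratio : (1 : ℝ) / 2 ≤ 2 * Real.sqrt 2 / 3 := by
      nlinarith [Real.sq_sqrt (show (0 : ℝ) ≤ 2 by norm_num), Real.sqrt_nonneg 2]
    calc normW D (xm - C⁻¹ *ᵥ d) ≤ (1 + 1 / 2) / (1 - 1 / 2) * (1 / 2) ^ m * normW D (C⁻¹ *ᵥ d) :=
          normW_sub_inv_mulVec_le_of_isMinOn hD (by norm_num) (by norm_num) hq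
            (isMinOn_iff.mpr hmin)
      _ ≤ 3 * (2 * Real.sqrt 2 / 3) ^ m * normW D (C⁻¹ *ᵥ d) := by
          norm_num only
          gcongr
          exact normW_nonneg _

/-- **Error bound for weighted GMRES** (linear-algebra core of Theorems 2.2 and 2.9). -/
theorem error_bound_weighted_GMRES {N : ℕ} (hN : 1 ≤ N)
    (D C : Matrix (Fin N) (Fin N) ℂ) (hD : D.PosDef)
    (h : opNormW D (1 - C) ≤ 1 / 2) :
    IsUnit C ∧ opNormW D C ≤ 3 / 2 ∧ opNormW D C⁻¹ ≤ 2 ∧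
    ∀ (d : Fin N → ℂ) (m : ℕ) (xm : Fin N → ℂ),
      xm ∈ krylov C d m →
      (∀ x ∈ krylov C d m, normW D (C.mulVec xm - d) ≤ normW D (C.mulVec x - d)) →
      normW D (xm - C⁻¹.mulVec d) ≤
        3 * (2 * Real.sqrt 2 / 3) ^ m * normW D (C⁻¹.mulVec d) :=
  error_bound_weighted_GMRES_general D C hD h
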